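/- arXiv:1608.00107 — 4 statements merged into one kernel-verified Lean document; each statement's English description precedes it below -/
import Mathlib

section
/- Let π : ℝ² → ℝ be a nonnegative, bounded, continuous function with π(a,b) = 0 whenever a > b. Fix real numbers x̲ < x̄. For each integer m ≥ 2 define f_m(x̲,x̄) = ∫∫_{{(a,b) : a ≤ x̲, b ≥ x̄}} m(m−1)(x̄−x̲)^{m−2}(b−a)^{−m} π(a,b) da db. Then lim_{m→∞} f_m(x̲,x̄) = π(x̲,x̄). -/
open MeasureTheory Filter

open Set Topology

/-!
On the quadrant `{(a, b) | a ≤ y, z ≤ b}` the integrand `m (m - 1) (xu - xl)^(m-2) (b - a)^(-m)`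
has total mass `m / (m - 2) · ((xu - xl) / (z - y))^(m-2)`. For `(y, z) = (xl, xu)` this tends to
`1`, while for `y = xl - δ` or `z = xu + δ` it decays geometrically; since the two shifted quadrants
cover everything outside the `δ`-ball around `(xl, xu)`, the kernels form an approximate identity
at `(xl, xu)`. Integrating them against the bounded function `π`, continuous at `(xl, xu)`, gives
`π (xl, xu)` in the limit.
-/

section ApproximateIdentity

variable {α ι : Type*} [MeasurableSpace α] {μ : Measure α}

theorem norm_setIntegral_mul_le {φ h : α → ℝ} {A : Set α} {c : ℝ} (hA : MeasurableSet A)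
    (hφ_int : IntegrableOn φ A μ) (hφ_nonneg : ∀ x ∈ A, 0 ≤ φ x) (hh : ∀ x ∈ A, |h x| ≤ c) :
    ‖∫ x in A, φ x * h x ∂μ‖ ≤ c * ∫ x in A, φ x ∂μ := by
  rw [← integral_const_mul]
  refine norm_integral_le_of_norm_le (hφ_int.const_mul c) ?_
  filter_upwards [ae_restrict_mem hA] with x hx
  rw [norm_mul, Real.norm_of_nonneg (hφ_nonneg x hx), mul_comm]
  exact mul_le_mul_of_nonneg_right (hh x hx) (hφ_nonneg x hx)

theorem setIntegral_le_add_of_subset_union {f : α → ℝ} {s t₁ t₂ : Set α} (hst : s ⊆ t₁ ∪ t₂)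
    (hf₁ : IntegrableOn f t₁ μ) (hf₂ : IntegrableOn f t₂ μ)
    (hf₁_nonneg : 0 ≤ᵐ[μ.restrict t₁] f) (hf₂_nonneg : 0 ≤ᵐ[μ.restrict t₂] f) :
    ∫ x in s, f x ∂μ ≤ ∫ x in t₁, f x ∂μ + ∫ x in t₂, f x ∂μ := by
  rw [← integral_add_measure hf₁ hf₂]
  refine integral_mono_measure ((Measure.restrict_mono_set μ hst).trans
    (Measure.restrict_union_le t₁ t₂)) ?_ (Integrable.add_measure hf₁ hf₂)
  rw [EventuallyLE, ae_add_measure_iff]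
  exact ⟨hf₁_nonneg, hf₂_nonneg⟩

variable [TopologicalSpace α] [OpensMeasurableSpace α] {l : Filter ι} {φ : ι → α → ℝ}
  {s : Set α} {x₀ : α}

theorem tendsto_setIntegral_mul_sub_of_concentrating {h : α → ℝ} {C : ℝ} (hs : MeasurableSet s)
    (hφ_nonneg : ∀ᶠ i in l, ∀ x ∈ s, 0 ≤ φ i x)
    (hφ_int : ∀ᶠ i in l, IntegrableOn (φ i) s μ)
    (hφ_mass : Tendsto (fun i => ∫ x in s, φ i x ∂μ) l (𝓝 1))
    (hφ_tail : ∀ u ∈ 𝓝 x₀, Tendsto (fun i => ∫ x in s \ u, φ i x ∂μ) l (𝓝 0))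
    (hh_meas : AEStronglyMeasurable h (μ.restrict s)) (hh_bdd : ∀ x ∈ s, |h x| ≤ C)
    (hh : Tendsto h (𝓝[s] x₀) (𝓝 0)) :
    Tendsto (fun i => ∫ x in s, φ i x * h x ∂μ) l (𝓝 0) := by
  refine Metric.tendsto_nhds.2 fun ε hε => ?_
  obtain ⟨u, hu_open, hx₀u, hu⟩ := mem_nhdsWithin.1
    (hh (Metric.closedBall_mem_nhds (0 : ℝ) (half_pos hε)))
  have hu_near : ∀ x ∈ s ∩ u, |h x| ≤ ε / 2 := fun x hx => by
    simpa [Real.dist_eq] using hu ⟨hx.2, hx.1⟩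
  have h_bound : Tendsto (fun i => ε / 2 * ∫ x in s ∩ u, φ i x ∂μ + C * ∫ x in s \ u, φ i x ∂μ)
      l (𝓝 (ε / 2)) := by
    have h_inner : Tendsto (fun i => ∫ x in s ∩ u, φ i x ∂μ) l (𝓝 1) := by
      refine (sub_zero (1 : ℝ) ▸ hφ_mass.sub (hφ_tail u (hu_open.mem_nhds hx₀u))).congr' ?_
      filter_upwards [hφ_int] with i hi
      rw [← integral_inter_add_sdiff hu_open.measurableSet hi, add_sub_cancel_right]
    simpa using (h_inner.const_mul (ε / 2)).add ((hφ_tail u (hu_open.mem_nhds hx₀u)).const_mul C)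
  filter_upwards [hφ_nonneg, hφ_int, h_bound.eventually_lt_const (half_lt_self hε)]
    with i hi_nonneg hi_int hi_lt
  have hφh_int : IntegrableOn (fun x => φ i x * h x) s μ :=
    hi_int.mul_bdd hh_meas ((ae_restrict_iff' hs).2 (.of_forall hh_bdd))
  rw [dist_zero_right, ← integral_inter_add_sdiff hu_open.measurableSet hφh_int]
  calc _ ≤ ‖∫ x in s ∩ u, φ i x * h x ∂μ‖ + ‖∫ x in s \ u, φ i x * h x ∂μ‖ := norm_add_le _ _
    _ ≤ ε / 2 * ∫ x in s ∩ u, φ i x ∂μ + C * ∫ x in s \ u, φ i x ∂μ := by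
      gcongr
      · exact norm_setIntegral_mul_le (hs.inter hu_open.measurableSet)
          (hi_int.mono_set inter_subset_left) (fun x hx => hi_nonneg x hx.1) hu_near
      · exact norm_setIntegral_mul_le (hs.diff hu_open.measurableSet)
          (hi_int.mono_set sdiff_subset) (fun x hx => hi_nonneg x hx.1) (fun x hx => hh_bdd x hx.1)
    _ < ε := by linarith

theorem tendsto_setIntegral_mul_of_concentrating {g : α → ℝ} {C : ℝ} (hs : MeasurableSet s)
    (hφ_nonneg : ∀ᶠ i in l, ∀ x ∈ s, 0 ≤ φ i x)
    (hφ_int : ∀ᶠ i in l, IntegrableOn (φ i) s μ)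
    (hφ_mass : Tendsto (fun i => ∫ x in s, φ i x ∂μ) l (𝓝 1))
    (hφ_tail : ∀ u ∈ 𝓝 x₀, Tendsto (fun i => ∫ x in s \ u, φ i x ∂μ) l (𝓝 0))
    (hg_meas : AEStronglyMeasurable g (μ.restrict s)) (hg_bdd : ∀ x ∈ s, |g x| ≤ C)
    (hg : ContinuousWithinAt g s x₀) :
    Tendsto (fun i => ∫ x in s, φ i x * g x ∂μ) l (𝓝 (g x₀)) := by
  have h_centered := tendsto_setIntegral_mul_sub_of_concentrating (h := fun x => g x - g x₀)
    (C := C + |g x₀|) hs hφ_nonneg hφ_int hφ_mass hφ_tail (hg_meas.sub aestronglyMeasurable_const)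
    (fun x hx => (abs_sub _ _).trans (add_le_add_left (hg_bdd x hx) _))
    (sub_self (g x₀) ▸ hg.tendsto.sub_const (g x₀))
  have h_sum := h_centered.add (hφ_mass.mul_const (g x₀))
  rw [zero_add, one_mul] at h_sum
  refine h_sum.congr' ?_
  filter_upwards [hφ_int] with i hi
  have hφg_int : IntegrableOn (fun x => φ i x * g x) s μ :=
    hi.mul_bdd hg_meas ((ae_restrict_iff' hs).2 (.of_forall hg_bdd))
  rw [← integral_mul_const, ← integral_add]
  · simp only [mul_sub, sub_add_cancel]
  · exact (hφg_int.sub (hi.mul_const (g x₀))).congr (.of_forall fun x => (mul_sub _ _ _).symm)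
  · exact hi.mul_const _

end ApproximateIdentity

theorem integral_Ioi_inv_sub_pow {a z : ℝ} (h : a < z) {n : ℕ} (hn : 1 < n) :
    ∫ b in Ioi z, ((b - a) ^ n)⁻¹ = ((z - a) ^ (n - 1))⁻¹ / ((n : ℝ) - 1) := by
  obtain ⟨k, rfl⟩ : ∃ k, n = k + 2 := ⟨n - 2, by omega⟩
  have hk : ((k + 2 : ℕ) : ℝ) - 1 = k + 1 := by push_cast; ring
  simp only [hk, show k + 2 - 1 = k + 1 by omega]
  have hderiv : ∀ b ∈ Ici z,
      HasDerivAt (fun b => -((b - a) ^ (k + 1))⁻¹ / ((k : ℝ) + 1)) ((b - a) ^ (k + 2))⁻¹ b := by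
    intro b hb
    have hba : b - a ≠ 0 := by linarith [mem_Ici.1 hb]
    refine (((((hasDerivAt_id' b).sub_const a).pow (k + 1)).inv
      (pow_ne_zero _ hba)).neg.div_const ((k : ℝ) + 1)).congr_deriv ?_
    simp only [Pi.pow_apply, Nat.add_sub_cancel]
    field_simp
    push_cast
    ring
  have hnonneg : ∀ b ∈ Ioi z, 0 ≤ ((b - a) ^ (k + 2))⁻¹ := fun b hb => by
    have : 0 < b - a := by linarith [mem_Ioi.1 hb]
    positivity
  have hlim : Tendsto (fun b => -((b - a) ^ (k + 1))⁻¹ / ((k : ℝ) + 1)) atTop (𝓝 0) := by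
    simpa [sub_eq_add_neg] using (((tendsto_pow_atTop k.succ_ne_zero).comp
      (tendsto_atTop_add_const_right _ (-a) tendsto_id)).inv_tendsto_atTop.neg.div_const
      ((k : ℝ) + 1))
  rw [integral_Ioi_of_hasDerivAt_of_nonneg' hderiv hnonneg hlim]
  ring

theorem integral_Iic_inv_sub_pow {y z : ℝ} (h : y < z) {n : ℕ} (hn : 1 < n) :
    ∫ a in Iic y, ((z - a) ^ n)⁻¹ = ((z - y) ^ (n - 1))⁻¹ / ((n : ℝ) - 1) := by
  have h_reflect := integral_comp_neg_Iic y (fun t => ((t - -z) ^ n)⁻¹)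
  simp only [neg_sub_neg] at h_reflect
  rw [h_reflect, integral_Ioi_inv_sub_pow (neg_lt_neg h) hn, neg_sub_neg]

theorem integral_Iic_prod_Ici_inv_sub_pow {y z : ℝ} (h : y < z) {m : ℕ} (hm : 2 < m) :
    ∫ q in Iic y ×ˢ Ici z, ((q.2 - q.1) ^ m)⁻¹
      = ((z - y) ^ (m - 2))⁻¹ / (((m : ℝ) - 1) * ((m : ℝ) - 2)) := by
  have h_inner : ∀ a ∈ Iic y,
      ∫ b in Ici z, ((b - a) ^ m)⁻¹ = ((z - a) ^ (m - 1))⁻¹ / ((m : ℝ) - 1) := fun a ha => by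
    rw [integral_Ici_eq_integral_Ioi, integral_Ioi_inv_sub_pow (ha.out.trans_lt h) (by omega)]
  have h_outer : ∫ a in Iic y, ((z - a) ^ (m - 1))⁻¹ / ((m : ℝ) - 1)
      = ((z - y) ^ (m - 2))⁻¹ / (((m : ℝ) - 1) * ((m : ℝ) - 2)) := by
    rw [integral_div, integral_Iic_inv_sub_pow h (by omega), Nat.cast_sub (by omega),
      show m - 1 - 1 = m - 2 by omega, div_div, mul_comm]
    push_cast
    ring
  have h_nonneg : ∀ a ∈ Iic y, ∀ b ∈ Ici z, 0 ≤ ((b - a) ^ m)⁻¹ := fun a ha b hb => by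
    have : 0 ≤ b - a := by linarith [ha.out, hb.out]
    positivity
  have hm' : (2 : ℝ) < m := by exact_mod_cast hm
  have hm₁ : (0 : ℝ) < (m : ℝ) - 1 := by linarith
  have hm₂ : (0 : ℝ) < (m : ℝ) - 2 := by linarith
  have h_restrict : (volume : Measure (ℝ × ℝ)).restrict (Iic y ×ˢ Ici z)
      = (volume.restrict (Iic y)).prod (volume.restrict (Ici z)) := by
    rw [Measure.volume_eq_prod, Measure.prod_restrict]
  have h_int : Integrable (fun q : ℝ × ℝ => ((q.2 - q.1) ^ m)⁻¹)
      ((volume.restrict (Iic y)).prod (volume.restrict (Ici z))) := by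
    rw [integrable_prod_iff (by fun_prop)]
    constructor
    · filter_upwards [ae_restrict_mem measurableSet_Iic] with a ha
      refine Integrable.of_integral_ne_zero ?_
      rw [h_inner a ha]
      have : 0 < z - a := by linarith [ha.out]
      positivity
    · refine (Integrable.of_integral_ne_zero (h_outer.trans_ne ?_)).congr ?_
      · have : 0 < z - y := by linarith
        positivity
      · filter_upwards [ae_restrict_mem measurableSet_Iic] with a ha
        rw [← h_inner a ha]
        refine setIntegral_congr_fun measurableSet_Ici fun b hb => ?_
        exact (Real.norm_of_nonneg (h_nonneg a ha b hb)).symm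
  rw [h_restrict, integral_prod _ h_int, setIntegral_congr_fun measurableSet_Iic h_inner, h_outer]

theorem Iic_prod_Ici_diff_ball_subset (y z : ℝ) {δ : ℝ} :
    Iic y ×ˢ Ici z \ Metric.ball (y, z) δ ⊆ Iic (y - δ) ×ˢ Ici z ∪ Iic y ×ˢ Ici (z + δ) := by
  rintro ⟨a, b⟩ ⟨⟨ha, hb⟩, h_far⟩
  rw [mem_Iic] at ha
  rw [mem_Ici] at hb
  rw [Metric.mem_ball, Prod.dist_eq, Real.dist_eq, Real.dist_eq, abs_of_nonpos (by linarith),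
    abs_of_nonneg (by linarith), max_lt_iff, not_and_or, not_lt, not_lt] at h_far
  rcases h_far with h_left | h_right
  · exact Or.inl ⟨by simp only [mem_Iic]; linarith, hb⟩
  · exact Or.inr ⟨ha, by simp only [mem_Ici]; linarith⟩

theorem tendsto_natCast_div_sub_two : Tendsto (fun m : ℕ => (m : ℝ) / (m - 2)) atTop (𝓝 1) := by
  simpa only [sub_eq_add_neg] using tendsto_natCast_div_add_atTop (-2 : ℝ)

/-- The joint density at `(xl, xu)` of the minimum and maximum of `m` i.i.d. uniform samples on
`[q.1, q.2]`, as a function of the endpoints `q`; it is the density only where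
`q.1 ≤ xl ≤ xu ≤ q.2`. -/
noncomputable def minMaxDensity (xl xu : ℝ) (m : ℕ) (q : ℝ × ℝ) : ℝ :=
  m * (m - 1) * (xu - xl) ^ (m - 2) * ((q.2 - q.1) ^ m)⁻¹

section minMaxDensity

variable {xl xu : ℝ} {m : ℕ}

theorem minMaxDensity_nonneg (hx : xl ≤ xu) (hm : 1 ≤ m) {q : ℝ × ℝ}
    (hq : q ∈ Iic xl ×ˢ Ici xu) : 0 ≤ minMaxDensity xl xu m q := by
  have : (1 : ℝ) ≤ m := by exact_mod_cast hm
  have : 0 ≤ (m : ℝ) - 1 := by linarith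
  have : 0 ≤ xu - xl := by linarith
  have : 0 ≤ q.2 - q.1 := by linarith [hq.1.out, hq.2.out]
  unfold minMaxDensity
  positivity

theorem setIntegral_minMaxDensity_Iic_prod_Ici {y z : ℝ} (h : y < z) (hm : 2 < m) :
    ∫ q in Iic y ×ˢ Ici z, minMaxDensity xl xu m q
      = m / (m - 2) * ((xu - xl) / (z - y)) ^ (m - 2) := by
  have hm₁ : (m : ℝ) - 1 ≠ 0 := by
    have : (2 : ℝ) < m := by exact_mod_cast hm
    linarith
  have : z - y ≠ 0 := by linarith
  unfold minMaxDensity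
  rw [integral_const_mul, integral_Iic_prod_Ici_inv_sub_pow h hm, div_pow]
  field_simp

theorem integrableOn_minMaxDensity_Iic_prod_Ici (hx : xl < xu) (hm : 2 < m) {y z : ℝ}
    (h : y < z) :
    IntegrableOn (minMaxDensity xl xu m) (Iic y ×ˢ Ici z) := by
  refine Integrable.of_integral_ne_zero ?_
  rw [setIntegral_minMaxDensity_Iic_prod_Ici h hm]
  have : (2 : ℝ) < m := by exact_mod_cast hm
  have : 0 < (m : ℝ) - 2 := by linarith
  have : 0 < xu - xl := by linarith
  have : 0 < z - y := by linarith
  positivity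

theorem tendsto_setIntegral_minMaxDensity (hx : xl < xu) :
    Tendsto (fun m => ∫ q in Iic xl ×ˢ Ici xu, minMaxDensity xl xu m q) atTop (𝓝 1) := by
  refine tendsto_natCast_div_sub_two.congr' ?_
  filter_upwards [eventually_gt_atTop 2] with m hm
  rw [setIntegral_minMaxDensity_Iic_prod_Ici hx hm, div_self (by linarith), one_pow, mul_one]

theorem tendsto_setIntegral_minMaxDensity_diff (hx : xl < xu) {u : Set (ℝ × ℝ)}
    (hu : u ∈ 𝓝 (xl, xu)) :
    Tendsto (fun m => ∫ q in Iic xl ×ˢ Ici xu \ u, minMaxDensity xl xu m q) atTop (𝓝 0) := by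
  obtain ⟨δ, hδ, h_ball⟩ := Metric.mem_nhds_iff.1 hu
  set ρ := (xu - xl) / (xu - xl + δ)
  have hρ₀ : 0 ≤ ρ := div_nonneg (by linarith) (by linarith)
  have hρ₁ : ρ < 1 := (div_lt_one (by linarith)).2 (by linarith)
  have h_bound : Tendsto (fun m : ℕ => 2 * (m / (m - 2) * ρ ^ (m - 2))) atTop (𝓝 0) := by
    simpa using ((tendsto_natCast_div_sub_two.mul
      ((tendsto_pow_atTop_nhds_zero_of_lt_one hρ₀ hρ₁).comp (tendsto_sub_atTop_nat 2))).const_mul 2)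
  refine tendsto_of_tendsto_of_tendsto_of_le_of_le' tendsto_const_nhds h_bound ?_ ?_
  · filter_upwards [eventually_ge_atTop 1] with m hm
    exact setIntegral_nonneg_of_ae_restrict (ae_restrict_of_ae_restrict_of_subset sdiff_subset
      (ae_restrict_of_forall_mem (measurableSet_Iic.prod measurableSet_Ici)
        fun q hq => minMaxDensity_nonneg hx.le hm hq))
  · filter_upwards [eventually_gt_atTop 2] with m hm
    have h_nonneg : ∀ {y z : ℝ}, y ≤ xl → xu ≤ z →
        0 ≤ᵐ[volume.restrict (Iic y ×ˢ Ici z)] minMaxDensity xl xu m := fun hy hz =>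
      ae_restrict_of_forall_mem (measurableSet_Iic.prod measurableSet_Ici) fun q hq =>
        minMaxDensity_nonneg hx.le (by omega) ⟨hq.1.out.trans hy, hz.trans hq.2.out⟩
    calc _ ≤ (∫ q in Iic (xl - δ) ×ˢ Ici xu, minMaxDensity xl xu m q)
          + ∫ q in Iic xl ×ˢ Ici (xu + δ), minMaxDensity xl xu m q :=
          setIntegral_le_add_of_subset_union
            ((sdiff_subset_sdiff_right h_ball).trans (Iic_prod_Ici_diff_ball_subset xl xu))
            (integrableOn_minMaxDensity_Iic_prod_Ici hx hm (by linarith))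
            (integrableOn_minMaxDensity_Iic_prod_Ici hx hm (by linarith))
            (h_nonneg (by linarith) le_rfl) (h_nonneg le_rfl (by linarith))
      _ = _ := by
          rw [setIntegral_minMaxDensity_Iic_prod_Ici (by linarith) hm,
            setIntegral_minMaxDensity_Iic_prod_Ici (by linarith) hm,
            show xu - (xl - δ) = xu - xl + δ by ring, show xu + δ - xl = xu - xl + δ by ring]
          ring

end minMaxDensity

theorem generative_tendsto_descriptive_uniform_general
    (π : ℝ × ℝ → ℝ) (hπ_nonneg : ∀ q, 0 ≤ π q) (hπ_bdd : ∃ M : ℝ, ∀ q, π q ≤ M)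
    (hπ_cont : Continuous π)
    (xl xu : ℝ) (hx : xl < xu) :
    Tendsto (fun m : ℕ =>
        ∫ q in {q : ℝ × ℝ | q.1 ≤ xl ∧ xu ≤ q.2},
          (m : ℝ) * ((m : ℝ) - 1) * (xu - xl) ^ (m - 2) * ((q.2 - q.1) ^ m)⁻¹ * π q)
      atTop (nhds (π (xl, xu))) := by
  obtain ⟨M, hM⟩ := hπ_bdd
  exact tendsto_setIntegral_mul_of_concentrating (measurableSet_Iic.prod measurableSet_Ici)
    ((eventually_ge_atTop 1).mono fun m hm q hq => minMaxDensity_nonneg hx.le hm hq)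
    ((eventually_gt_atTop 2).mono fun m hm => integrableOn_minMaxDensity_Iic_prod_Ici hx hm hx)
    (tendsto_setIntegral_minMaxDensity hx)
    (fun u hu => tendsto_setIntegral_minMaxDensity_diff hx hu)
    hπ_cont.aestronglyMeasurable (fun q _ => (abs_of_nonneg (hπ_nonneg q)).trans_le (hM q))
    hπ_cont.continuousWithinAt

/-- **Theorem 6 of the paper.** Let `π : ℝ² → ℝ` be a nonnegative, bounded,
continuous function with `π(a,b) = 0` whenever `a > b`. Fix `x̲ < x̄`. For each integer
`m ≥ 2` let
`f_m(x̲,x̄) = ∫∫_{a ≤ x̲, b ≥ x̄} m(m−1)(x̄−x̲)^{m−2}(b−a)^{−m} π(a,b) da db`.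
Then `f_m(x̲,x̄) → π(x̲,x̄)` as `m → ∞`. -/
theorem generative_tendsto_descriptive_uniform
    (π : ℝ × ℝ → ℝ) (hπ_nonneg : ∀ q, 0 ≤ π q) (hπ_bdd : ∃ M : ℝ, ∀ q, π q ≤ M)
    (hπ_cont : Continuous π) (hπ_zero : ∀ a b : ℝ, b < a → π (a, b) = 0)
    (xl xu : ℝ) (hx : xl < xu) :
    Tendsto (fun m : ℕ =>
        ∫ q in {q : ℝ × ℝ | q.1 ≤ xl ∧ xu ≤ q.2},
          (m : ℝ) * ((m : ℝ) - 1) * (xu - xl) ^ (m - 2) * ((q.2 - q.1) ^ m)⁻¹ * π q)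
      atTop (nhds (π (xl, xu))) :=
  generative_tendsto_descriptive_uniform_general π hπ_nonneg hπ_bdd hπ_cont xl xu hx
end

section
/- The Borel σ-algebra of 𝕀 (generated by the subspace topology that 𝕀 inherits from ℝ²) equals the σ-algebra on 𝕀 generated by the collection 𝓕 = { {[x'] ⊆ [x]} : [x] ∈ 𝕀 } of all containment sets. -/
/-!
Containment sets are closed in `𝕀`, hence Borel. Conversely, `{a ≤ x̲}` and `{x̄ ≤ b}` are
countable unions of containment sets (let the free endpoint run to `±∞` along the integers), so
both endpoint maps, and thus the inclusion `𝕀 → ℝ²`, are measurable for the generated σ-algebra.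
-/

open MeasurableSpace MeasureTheory Set

section

variable {α : Type*} {m : MeasurableSpace α} {f g : α → ℝ}

theorem measurableSet_preimage_Ici_of_measurableSet_Ici_inter_Iic
    (h : ∀ a b, a ≤ b → MeasurableSet (f ⁻¹' Ici a ∩ g ⁻¹' Iic b)) (a : ℝ) :
    MeasurableSet (f ⁻¹' Ici a) := by
  have hunion : f ⁻¹' Ici a = ⋃ n : ℕ, f ⁻¹' Ici a ∩ g ⁻¹' Iic (max a n) := by
    ext x
    simp only [mem_preimage, mem_Ici, mem_iUnion, mem_inter_iff, mem_Iic]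
    refine ⟨fun hx => ?_, fun ⟨_, hx, _⟩ => hx⟩
    obtain ⟨n, hn⟩ := exists_nat_ge (g x)
    exact ⟨n, hx, hn.trans (le_max_right _ _)⟩
  rw [hunion]
  exact .iUnion fun n => h _ _ (le_max_left _ _)

theorem measurableSet_preimage_Iic_of_measurableSet_Ici_inter_Iic
    (h : ∀ a b, a ≤ b → MeasurableSet (f ⁻¹' Ici a ∩ g ⁻¹' Iic b)) (b : ℝ) :
    MeasurableSet (g ⁻¹' Iic b) := by
  have hunion : g ⁻¹' Iic b = ⋃ n : ℕ, f ⁻¹' Ici (min b (-n)) ∩ g ⁻¹' Iic b := by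
    ext x
    simp only [mem_preimage, mem_Iic, mem_iUnion, mem_inter_iff, mem_Ici]
    refine ⟨fun hx => ?_, fun ⟨_, _, hx⟩ => hx⟩
    obtain ⟨n, hn⟩ := exists_nat_ge (-f x)
    exact ⟨n, (min_le_right _ _).trans (neg_le.mp hn), hx⟩
  rw [hunion]
  exact .iUnion fun n => h _ _ (min_le_left _ _)

theorem measurable_prodMk_of_measurableSet_Ici_inter_Iic
    (h : ∀ a b, a ≤ b → MeasurableSet (f ⁻¹' Ici a ∩ g ⁻¹' Iic b)) :
    Measurable fun x => (f x, g x) :=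
  (measurable_of_Ici (measurableSet_preimage_Ici_of_measurableSet_Ici_inter_Iic h)).prodMk
    (measurable_of_Iic (measurableSet_preimage_Iic_of_measurableSet_Ici_inter_Iic h))

end

/-- The Borel σ-algebra of `𝕀 = {(x̲,x̄) ∈ ℝ² : x̲ ≤ x̄}` (generated by
the subspace topology inherited from ℝ²) equals the σ-algebra generated by the collection
`𝓕 = { {[x'] ⊆ [x]} : [x] ∈ 𝕀 }` of all containment sets
`{[x'] ⊆ [x]} = {(u,v) ∈ 𝕀 : x̲ ≤ u ≤ v ≤ x̄}`. -/
theorem borel_eq_generateFrom_containment_sets :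
    borel {p : ℝ × ℝ // p.1 ≤ p.2} =
      MeasurableSpace.generateFrom
        {s : Set {p : ℝ × ℝ // p.1 ≤ p.2} |
          ∃ x : {p : ℝ × ℝ // p.1 ≤ p.2},
            s = {y : {p : ℝ × ℝ // p.1 ≤ p.2} | x.1.1 ≤ y.1.1 ∧ y.1.2 ≤ x.1.2}} := by
  refine le_antisymm ?_ (generateFrom_le ?_)
  · rw [borel_comap, ← BorelSpace.measurable_eq]
    exact Measurable.comap_le <| measurable_prodMk_of_measurableSet_Ici_inter_Iic
      fun a b hab => measurableSet_generateFrom ⟨⟨(a, b), hab⟩, rfl⟩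
  · rintro s ⟨x, rfl⟩
    have hclosed : IsClosed {y : {p : ℝ × ℝ // p.1 ≤ p.2} | x.1.1 ≤ y.1.1 ∧ y.1.2 ≤ x.1.2} :=
      (isClosed_Ici.preimage (continuous_fst.comp continuous_subtype_val)).inter
        (isClosed_Iic.preimage (continuous_snd.comp continuous_subtype_val))
    exact .of_compl (measurableSet_generateFrom hclosed.isOpen_compl)
end

section
/- The family ℰ consisting of all sets B([a],[b]) and all sets W([c]), for [a], [b], [c] ∈ 𝕀, is a topological basis for the subspace topology on 𝕀 inherited from the standard topology on ℝ². -/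
/-!
Both families consist of open sets, being cut out by strict inequalities in the continuous
coordinates. Near a point `x` of the diagonal `x̲ = x̄`, the set `W([x̲ - ε, x̄ + ε])` lies in
the `ε`-ball around `x`. Off the diagonal, `B([a], [b])` with `[a] = [x̲ + δ, x̄ - δ]` and
`[b] = [x̲ - δ, x̄ + δ]` does, where `δ ≤ ε` is also small enough that `[a]` is still an interval.
-/

open TopologicalSpace

local notation "𝕀" => {p : ℝ × ℝ // Prod.fst p ≤ Prod.snd p}

namespace IntervalSpace

/-- `W([c])`. -/
def strictSubintervals (c : 𝕀) : Set 𝕀 :=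
  {x | c.1.1 < x.1.1 ∧ x.1.2 < c.1.2}

/-- `B([a], [b])`. -/
def intervalsBetween (a b : 𝕀) : Set 𝕀 :=
  {x | b.1.1 < x.1.1 ∧ x.1.1 < a.1.1 ∧ a.1.2 < x.1.2 ∧ x.1.2 < b.1.2}

theorem isOpen_strictSubintervals (c : 𝕀) : IsOpen (strictSubintervals c) := by
  simp only [strictSubintervals, Set.ofPred_and]
  repeat' apply IsOpen.inter
  all_goals exact isOpen_lt (by fun_prop) (by fun_prop)

theorem isOpen_intervalsBetween (a b : 𝕀) : IsOpen (intervalsBetween a b) := by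
  simp only [intervalsBetween, Set.ofPred_and]
  repeat' apply IsOpen.inter
  all_goals exact isOpen_lt (by fun_prop) (by fun_prop)

theorem mem_ball_iff {x y : 𝕀} {ε : ℝ} :
    y ∈ Metric.ball x ε ↔ |y.1.1 - x.1.1| < ε ∧ |y.1.2 - x.1.2| < ε := by
  rw [Metric.mem_ball, Subtype.dist_eq, Prod.dist_eq, max_lt_iff, Real.dist_eq, Real.dist_eq]

theorem exists_strictSubintervals_subset_ball {x : 𝕀} (hx : x.1.1 = x.1.2) {ε : ℝ}
    (hε : 0 < ε) : ∃ c, x ∈ strictSubintervals c ∧ strictSubintervals c ⊆ Metric.ball x ε := by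
  refine ⟨⟨(x.1.1 - ε, x.1.2 + ε), by linarith [x.2]⟩, ⟨by simpa, by simpa⟩, ?_⟩
  rintro y ⟨hy₁, hy₂⟩
  have hy := y.2
  simp only at hy₁ hy₂
  rw [mem_ball_iff, abs_sub_lt_iff, abs_sub_lt_iff]
  refine ⟨⟨?_, ?_⟩, ?_, ?_⟩ <;> linarith

theorem exists_intervalsBetween_subset_ball {x : 𝕀} (hx : x.1.1 < x.1.2) {ε : ℝ}
    (hε : 0 < ε) :
    ∃ a b, x ∈ intervalsBetween a b ∧ intervalsBetween a b ⊆ Metric.ball x ε := by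
  set δ := min ε ((x.1.2 - x.1.1) / 2)
  have hδ : 0 < δ := lt_min hε (by linarith)
  have hδε : δ ≤ ε := min_le_left _ _
  have hδx : δ ≤ (x.1.2 - x.1.1) / 2 := min_le_right _ _
  refine ⟨⟨(x.1.1 + δ, x.1.2 - δ), show x.1.1 + δ ≤ x.1.2 - δ by linarith⟩,
    ⟨(x.1.1 - δ, x.1.2 + δ), show x.1.1 - δ ≤ x.1.2 + δ by linarith⟩, ?_, ?_⟩
  · refine ⟨?_, ?_, ?_, ?_⟩ <;> dsimp only <;> linarith
  · rintro y ⟨hy₁, hy₂, hy₃, hy₄⟩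
    simp only at hy₁ hy₂ hy₃ hy₄
    rw [mem_ball_iff, abs_sub_lt_iff, abs_sub_lt_iff]
    refine ⟨⟨?_, ?_⟩, ?_, ?_⟩ <;> linarith

end IntervalSpace

open IntervalSpace

/-- The family `ℰ` consisting of all sets
`B([a],[b]) = {(u,v) ∈ 𝕀 : b̲ < u < a̲, ā < v < b̄}` and all sets
`W([c]) = {(u,v) ∈ 𝕀 : c̲ < u ≤ v < c̄}`, for `[a], [b], [c] ∈ 𝕀`, is a topological
basis for the subspace topology on `𝕀 = {(x̲,x̄) ∈ ℝ² : x̲ ≤ x̄}` inherited from ℝ². -/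
theorem basis_of_intervalSpace :
    TopologicalSpace.IsTopologicalBasis
      {s : Set {p : ℝ × ℝ // p.1 ≤ p.2} |
        (∃ a b : {p : ℝ × ℝ // p.1 ≤ p.2},
          s = {x : {p : ℝ × ℝ // p.1 ≤ p.2} |
            b.1.1 < x.1.1 ∧ x.1.1 < a.1.1 ∧ a.1.2 < x.1.2 ∧ x.1.2 < b.1.2}) ∨
        (∃ c : {p : ℝ × ℝ // p.1 ≤ p.2},
          s = {x : {p : ℝ × ℝ // p.1 ≤ p.2} | c.1.1 < x.1.1 ∧ x.1.2 < c.1.2})} := by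
  refine isTopologicalBasis_of_isOpen_of_nhds ?_ fun x u hx hu => ?_
  · rintro s (⟨a, b, rfl⟩ | ⟨c, rfl⟩)
    exacts [isOpen_intervalsBetween a b, isOpen_strictSubintervals c]
  obtain ⟨ε, hε, hball⟩ := Metric.isOpen_iff.mp hu x hx
  rcases x.2.eq_or_lt with hdiag | hoff
  · obtain ⟨c, hxc, hc⟩ := exists_strictSubintervals_subset_ball hdiag hε
    exact ⟨_, Or.inr ⟨c, rfl⟩, hxc, hc.trans hball⟩
  · obtain ⟨a, b, hxab, hab⟩ := exists_intervalsBetween_subset_ball hoff hε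
    exact ⟨_, Or.inl ⟨a, b, rfl⟩, hxab, hab.trans hball⟩
end

section
/- The subspace topology on 𝕀 inherited from ℝ² is the smallest topology on 𝕀 containing all the sets W([c]) and all the complements (in 𝕀) of the containment sets {[x'] ⊆ [c]}, for [c] ∈ 𝕀; that is, it equals the topology generated by { W([c]) : [c] ∈ 𝕀 } ∪ { 𝕀 \ {[x'] ⊆ [c]} : [c] ∈ 𝕀 }. -/
/-!
Each `W([c])` is open and each containment set is closed in the subspace topology, since
both are cut out by strict, resp. non-strict, inequalities between continuous coordinates.
Conversely, the generated topology makes both endpoint maps continuous: `{x̄ < b}` and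
`{a < x̲}` are unions of sets `W([c])`, while `{x̲ < b} = ⋃_{d ≥ b} {x̄ < d} \ {[x'] ⊆ [b, d]}`
and dually `{a < x̄} = ⋃_{d ≤ a} {d < x̲} \ {[x'] ⊆ [d, a]}`.
-/

open TopologicalSpace Set Topology

abbrev IntervalPairs (α : Type*) [LE α] := {p : α × α // p.1 ≤ p.2}

namespace IntervalPairs

variable {α : Type*} [LinearOrder α]

def strictSubintervals (c : IntervalPairs α) : Set (IntervalPairs α) :=
  {x | c.1.1 < x.1.1 ∧ x.1.2 < c.1.2}

def subintervals (c : IntervalPairs α) : Set (IntervalPairs α) :=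
  {x | c.1.1 ≤ x.1.1 ∧ x.1.2 ≤ c.1.2}

variable (α) in
def subbasis : Set (Set (IntervalPairs α)) :=
  range strictSubintervals ∪ range fun c ↦ (subintervals c)ᶜ

section OrderClosed

variable [TopologicalSpace α] [OrderClosedTopology α]

theorem isOpen_strictSubintervals (c : IntervalPairs α) : IsOpen (strictSubintervals c) :=
  (isOpen_lt continuous_const (continuous_fst.comp continuous_subtype_val)).inter
    (isOpen_lt (continuous_snd.comp continuous_subtype_val) continuous_const)

theorem isClosed_subintervals (c : IntervalPairs α) : IsClosed (subintervals c) :=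
  (isClosed_le continuous_const (continuous_fst.comp continuous_subtype_val)).inter
    (isClosed_le (continuous_snd.comp continuous_subtype_val) continuous_const)

theorem le_generateFrom_subbasis :
    (inferInstance : TopologicalSpace (IntervalPairs α)) ≤ generateFrom (subbasis α) := by
  refine le_generateFrom ?_
  rintro _ (⟨c, rfl⟩ | ⟨c, rfl⟩)
  exacts [isOpen_strictSubintervals c, (isClosed_subintervals c).isOpen_compl]

end OrderClosed

theorem isOpen_generateFrom_subbasis_snd_lt [NoMinOrder α] (b : α) :
    IsOpen[generateFrom (subbasis α)] {x | x.1.2 < b} := by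
  let := generateFrom (subbasis α)
  have hunion : {x : IntervalPairs α | x.1.2 < b} =
      ⋃ (a) (h : a ≤ b), strictSubintervals ⟨(a, b), h⟩ := by
    ext x
    simp only [mem_ofPred_eq, mem_iUnion, strictSubintervals]
    refine ⟨fun hx ↦ ?_, fun ⟨_, _, _, hx⟩ ↦ hx⟩
    obtain ⟨a, ha⟩ := exists_lt x.1.1
    exact ⟨a, (ha.trans_le x.2).le.trans hx.le, ha, hx⟩
  rw [hunion]
  exact isOpen_iUnion fun _ ↦ isOpen_iUnion fun _ ↦ isOpen_generateFrom_of_mem (.inl ⟨_, rfl⟩)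

theorem isOpen_generateFrom_subbasis_lt_fst [NoMaxOrder α] (a : α) :
    IsOpen[generateFrom (subbasis α)] {x | a < x.1.1} := by
  let := generateFrom (subbasis α)
  have hunion : {x : IntervalPairs α | a < x.1.1} =
      ⋃ (b) (h : a ≤ b), strictSubintervals ⟨(a, b), h⟩ := by
    ext x
    simp only [mem_ofPred_eq, mem_iUnion, strictSubintervals]
    refine ⟨fun hx ↦ ?_, fun ⟨_, _, hx, _⟩ ↦ hx⟩
    obtain ⟨b, hb⟩ := exists_gt x.1.2
    exact ⟨b, hx.le.trans (x.2.trans hb.le), hx, hb⟩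
  rw [hunion]
  exact isOpen_iUnion fun _ ↦ isOpen_iUnion fun _ ↦ isOpen_generateFrom_of_mem (.inl ⟨_, rfl⟩)

theorem isOpen_generateFrom_subbasis_fst_lt [NoMinOrder α] [NoMaxOrder α] (b : α) :
    IsOpen[generateFrom (subbasis α)] {x | x.1.1 < b} := by
  let := generateFrom (subbasis α)
  have hunion : {x : IntervalPairs α | x.1.1 < b} =
      ⋃ (d) (h : b ≤ d), {x | x.1.2 < d} ∩ (subintervals ⟨(b, d), h⟩)ᶜ := by
    ext x
    simp only [mem_ofPred_eq, mem_iUnion, mem_inter_iff, mem_compl_iff, subintervals, not_and,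
      not_le]
    refine ⟨fun hx ↦ ?_, fun ⟨d, _, hd, hx⟩ ↦ not_le.mp fun h ↦ (hx h).not_gt hd⟩
    obtain ⟨d, hd⟩ := exists_gt (max x.1.2 b)
    exact ⟨d, (le_max_right _ _).trans hd.le, (le_max_left _ _).trans_lt hd,
      fun h ↦ absurd hx h.not_gt⟩
  rw [hunion]
  exact isOpen_iUnion fun d ↦ isOpen_iUnion fun _ ↦
    (isOpen_generateFrom_subbasis_snd_lt d).inter (isOpen_generateFrom_of_mem (.inr ⟨_, rfl⟩))

theorem isOpen_generateFrom_subbasis_lt_snd [NoMinOrder α] [NoMaxOrder α] (a : α) :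
    IsOpen[generateFrom (subbasis α)] {x | a < x.1.2} := by
  let := generateFrom (subbasis α)
  have hunion : {x : IntervalPairs α | a < x.1.2} =
      ⋃ (d) (h : d ≤ a), {x | d < x.1.1} ∩ (subintervals ⟨(d, a), h⟩)ᶜ := by
    ext x
    simp only [mem_ofPred_eq, mem_iUnion, mem_inter_iff, mem_compl_iff, subintervals, not_and,
      not_le]
    refine ⟨fun hx ↦ ?_, fun ⟨d, _, hd, hx⟩ ↦ hx hd.le⟩
    obtain ⟨d, hd⟩ := exists_lt (min x.1.1 a)
    exact ⟨d, hd.le.trans (min_le_right _ _), hd.trans_le (min_le_left _ _), fun _ ↦ hx⟩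
  rw [hunion]
  exact isOpen_iUnion fun d ↦ isOpen_iUnion fun _ ↦
    (isOpen_generateFrom_subbasis_lt_fst d).inter (isOpen_generateFrom_of_mem (.inr ⟨_, rfl⟩))

variable [TopologicalSpace α] [OrderTopology α] [NoMinOrder α] [NoMaxOrder α]

theorem generateFrom_subbasis_le :
    generateFrom (subbasis α) ≤ (inferInstance : TopologicalSpace (IntervalPairs α)) := by
  let := generateFrom (subbasis α)
  rw [instTopologicalSpaceSubtype, ← continuous_iff_le_induced]
  exact continuous_prodMk.mpr
    ⟨OrderTopology.continuous_iff.mpr fun a ↦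
      ⟨isOpen_generateFrom_subbasis_lt_fst a, isOpen_generateFrom_subbasis_fst_lt a⟩,
    OrderTopology.continuous_iff.mpr fun a ↦
      ⟨isOpen_generateFrom_subbasis_lt_snd a, isOpen_generateFrom_subbasis_snd_lt a⟩⟩

theorem topology_eq_generateFrom_subbasis :
    (inferInstance : TopologicalSpace (IntervalPairs α)) = generateFrom (subbasis α) :=
  le_generateFrom_subbasis.antisymm generateFrom_subbasis_le

end IntervalPairs

/-- The subspace topology on `𝕀 = {(x̲,x̄) ∈ ℝ² : x̲ ≤ x̄}` inherited
from ℝ² equals the topology generated by the sets `W([c]) = {(u,v) ∈ 𝕀 : c̲ < u ≤ v < c̄}`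
together with the complements (in 𝕀) of the containment sets
`{[x'] ⊆ [c]} = {(u,v) ∈ 𝕀 : c̲ ≤ u ≤ v ≤ c̄}`, for `[c] ∈ 𝕀`. -/
theorem topology_generated_by_W_and_containment_complements :
    (inferInstance : TopologicalSpace {p : ℝ × ℝ // p.1 ≤ p.2}) =
      TopologicalSpace.generateFrom
        ({s : Set {p : ℝ × ℝ // p.1 ≤ p.2} |
            ∃ c : {p : ℝ × ℝ // p.1 ≤ p.2},
              s = {x : {p : ℝ × ℝ // p.1 ≤ p.2} | c.1.1 < x.1.1 ∧ x.1.2 < c.1.2}} ∪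
         {s : Set {p : ℝ × ℝ // p.1 ≤ p.2} |
            ∃ c : {p : ℝ × ℝ // p.1 ≤ p.2},
              s = {x : {p : ℝ × ℝ // p.1 ≤ p.2} | c.1.1 ≤ x.1.1 ∧ x.1.2 ≤ c.1.2}ᶜ}) := by
  rw [IntervalPairs.topology_eq_generateFrom_subbasis]
  congr 1
  ext s
  simp only [IntervalPairs.subbasis, mem_union, mem_range, mem_ofPred_eq, eq_comm]
  rfl
end
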